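/- Let f ∈ I ⊆ K{X}° with N = val(f), and suppose g ∈ K{X}° satisfies val(g) ≤ N and LM(ρ(g)) divides LM(ρ(f)) in k[X], say LM(ρ(f)) = X^i · LM(ρ(g)). Then LM(f) = π^{N - val(g)} · X^i · LM(g), and in particular LM(g) divides LM(f) in the monoid of Tate monomials. -/

import Mathlib

open MvPowerSeries

namespace TateStmt

variable {n : ℕ} {O : Type*} [CommRing O]

/-- The Tate condition: the (π-adic) valuations of the coefficients tend to infinity. -/
def IsTate (π : O) (f : MvPowerSeries (Fin n) O) : Prop :=
  ∀ N : ℕ, {i : Fin n →₀ ℕ | ¬ π ^ N ∣ MvPowerSeries.coeff i f}.Finite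

/-- The integral Tate algebra `K{X}°`, as a subring of the ring of formal power series
over the valuation ring `O = K°`. -/
def TateAlgebra (n : ℕ) (O : Type*) [CommRing O] (π : O) :
    Subring (MvPowerSeries (Fin n) O) where
  carrier := {f | IsTate π f}
  zero_mem' := by
    intro N
    apply Set.Finite.subset (Set.finite_empty)
    intro i hi
    exact hi (Dvd.intro 0 (by simp))
  one_mem' := by
    intro N
    apply Set.Finite.subset (Set.finite_singleton (0 : Fin n →₀ ℕ))
    intro i hi
    by_contra h
    rw [Set.mem_singleton_iff] at h
    apply hi
    rw [MvPowerSeries.coeff_one, if_neg h]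
    exact Dvd.intro 0 (by simp)
  add_mem' := by
    intro f g hf hg N
    apply Set.Finite.subset ((hf N).union (hg N))
    intro i hi
    by_contra h
    simp only [Set.mem_union, Set.mem_setOf_eq, not_or, not_not] at h
    exact hi (by rw [map_add]; exact dvd_add h.1 h.2)
  neg_mem' := by
    intro f hf N
    apply Set.Finite.subset (hf N)
    intro i hi
    by_contra h
    simp only [Set.mem_setOf_eq, not_not] at h
    exact hi (by rw [map_neg]; exact (dvd_neg).mpr h)
  mul_mem' := by
    intro f g hf hg N
    apply Set.Finite.subset (Set.Finite.add (hf N) (hg N))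
    intro i hi
    by_contra h
    apply hi
    rw [MvPowerSeries.coeff_mul]
    apply Finset.dvd_sum
    intro p hp
    rw [Finset.HasAntidiagonal.mem_antidiagonal] at hp
    by_cases h1 : π ^ N ∣ MvPowerSeries.coeff p.1 f
    · exact Dvd.dvd.mul_right h1 _
    · by_cases h2 : π ^ N ∣ MvPowerSeries.coeff p.2 g
      · exact Dvd.dvd.mul_left h2 _
      · exact absurd (hp ▸ Set.add_mem_add h1 h2) h

/-- Tate monomials `π^a X^i`, identified with pairs `(a, i) ∈ ℕ × ℕ^n`. -/
abbrev TMon (n : ℕ) := ℕ × (Fin n →₀ ℕ)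

noncomputable def monMul (a b : TMon n) : TMon n := (a.1 + b.1, a.2 + b.2)
def monDvd (a b : TMon n) : Prop := a.1 ≤ b.1 ∧ a.2 ≤ b.2
noncomputable def monDiv (a b : TMon n) : TMon n := (a.1 - b.1, a.2 - b.2)
noncomputable def monLcm (a b : TMon n) : TMon n := (max a.1 b.1, a.2 ⊔ b.2)

/-- The valuation-first term order: compare valuations first (a *smaller* valuation gives a
*larger* term), then exponents via the monomial order `mo`. -/
def termLT (mo : MonomialOrder (Fin n)) (a b : TMon n) : Prop :=
  b.1 < a.1 ∨ (a.1 = b.1 ∧ mo.toSyn a.2 < mo.toSyn b.2)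

def termLE (mo : MonomialOrder (Fin n)) (a b : TMon n) : Prop :=
  a = b ∨ termLT mo a b

/-- Order on `Option (TMon n)`, where `none` (the "monomial" of `0`) is smallest. -/
def optLT (mo : MonomialOrder (Fin n)) : Option (TMon n) → Option (TMon n) → Prop
  | none, none => False
  | none, some _ => True
  | some _, none => False
  | some a, some b => termLT mo a b

def optLE (mo : MonomialOrder (Fin n)) (a b : Option (TMon n)) : Prop :=
  a = b ∨ optLT mo a b

noncomputable def optMul (t : TMon n) : Option (TMon n) → Option (TMon n)
  | none => none
  | some a => some (monMul t a)

/-- `(a, i)` is (the monomial of) a term of `f`: the coefficient of `X^i` has valuation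
exactly `a`. -/
def IsTerm (π : O) (f : MvPowerSeries (Fin n) O) (m : TMon n) : Prop :=
  π ^ m.1 ∣ MvPowerSeries.coeff m.2 f ∧ ¬ π ^ (m.1 + 1) ∣ MvPowerSeries.coeff m.2 f

/-- `m` is the leading monomial of `f`. -/
def IsLM (π : O) (mo : MonomialOrder (Fin n)) (f : MvPowerSeries (Fin n) O) (m : TMon n) :
    Prop :=
  IsTerm π f m ∧ ∀ m', IsTerm π f m' → termLE mo m' m

/-- `s` is the leading monomial of `f`, with the convention `LM 0 = none`. -/
def IsLMopt (π : O) (mo : MonomialOrder (Fin n)) (f : MvPowerSeries (Fin n) O) :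
    Option (TMon n) → Prop
  | none => f = 0
  | some m => IsLM π mo f m

/-- All coefficients of `f` are divisible by `π^N`, i.e. `val f ≥ N`. -/
def DvdAll (π : O) (N : ℕ) (f : MvPowerSeries (Fin n) O) : Prop :=
  ∀ i, π ^ N ∣ MvPowerSeries.coeff i f

/-- The Gauss valuation of `f` is exactly `N`. -/
def ValEq (π : O) (f : MvPowerSeries (Fin n) O) (N : ℕ) : Prop :=
  DvdAll π N f ∧ ¬ DvdAll π (N + 1) f

/-- `G` is a Gröbner basis of the ideal `I` of the (integral) Tate algebra. -/
def IsGB (π : O) (mo : MonomialOrder (Fin n)) (G : Set (TateAlgebra n O π))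
    (I : Ideal (TateAlgebra n O π)) : Prop :=
  (∀ g ∈ G, g ∈ I) ∧
    ∀ f ∈ I, (f : MvPowerSeries (Fin n) O) ≠ 0 → ∀ mf,
      IsLM π mo (f : MvPowerSeries (Fin n) O) mf →
        ∃ g ∈ G, ∃ mg, IsLM π mo (g : MvPowerSeries (Fin n) O) mg ∧ monDvd mg mf

/-- The module `M = {(u,v) : u f - v ∈ I₀}`. -/
def SigMod {π : O} (I0 : Ideal (TateAlgebra n O π)) (f : TateAlgebra n O π) :
    Set (TateAlgebra n O π × TateAlgebra n O π) :=
  {p | p.1 * f - p.2 ∈ I0}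

/-- `p = (u₁,v₁)` is top-reducible by `q = (u₂,v₂)`. -/
def TopRed (π : O) (mo : MonomialOrder (Fin n))
    (p q : TateAlgebra n O π × TateAlgebra n O π) : Prop :=
  (q.2 = 0 ∧ ∃ mu mq, IsLM π mo (p.1 : MvPowerSeries (Fin n) O) mu ∧
      IsLM π mo (q.1 : MvPowerSeries (Fin n) O) mq ∧ monDvd mq mu)
  ∨ (p.2 ≠ 0 ∧ q.2 ≠ 0 ∧
      ∃ m1 m2, IsLM π mo (p.2 : MvPowerSeries (Fin n) O) m1 ∧
        IsLM π mo (q.2 : MvPowerSeries (Fin n) O) m2 ∧ monDvd m2 m1 ∧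
        ∃ s1 s2, IsLMopt π mo (p.1 : MvPowerSeries (Fin n) O) s1 ∧
          IsLMopt π mo (q.1 : MvPowerSeries (Fin n) O) s2 ∧
          optLE mo (optMul (monDiv m1 m2) s2) s1)

/-- `G` is a strong Gröbner basis of the module `M = SigMod I0 f`. -/
def IsSGB (π : O) (mo : MonomialOrder (Fin n)) (I0 : Ideal (TateAlgebra n O π))
    (f : TateAlgebra n O π) (G : Set (TateAlgebra n O π × TateAlgebra n O π)) : Prop :=
  G.Finite ∧ G ⊆ SigMod I0 f ∧
    ∀ p ∈ SigMod I0 f, p ≠ 0 → ∃ q ∈ G, TopRed π mo p q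

/-- `p` is covered by `q`. -/
def Covers (π : O) (mo : MonomialOrder (Fin n))
    (q p : TateAlgebra n O π × TateAlgebra n O π) : Prop :=
  ∃ mu mq, IsLM π mo (p.1 : MvPowerSeries (Fin n) O) mu ∧
    IsLM π mo (q.1 : MvPowerSeries (Fin n) O) mq ∧ monDvd mq mu ∧
    ∃ sv sp, IsLMopt π mo (q.2 : MvPowerSeries (Fin n) O) sv ∧
      IsLMopt π mo (p.2 : MvPowerSeries (Fin n) O) sp ∧
      optLT mo (optMul (monDiv mu mq) sv) sp

def CoveredBy (π : O) (mo : MonomialOrder (Fin n))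
    (p : TateAlgebra n O π × TateAlgebra n O π)
    (G : Set (TateAlgebra n O π × TateAlgebra n O π)) : Prop :=
  ∃ q ∈ G, Covers π mo q p

/-- The Tate series `π^a X^i`, as an element of the Tate algebra. -/
noncomputable def monTA (π : O) (m : TMon n) : TateAlgebra n O π :=
  ⟨MvPowerSeries.monomial m.2 (π ^ m.1), by
    intro N
    apply Set.Finite.subset (Set.finite_singleton m.2)
    intro i hi
    by_contra h
    rw [Set.mem_singleton_iff] at h
    apply hi
    rw [MvPowerSeries.coeff_monomial, if_neg h]
    exact Dvd.intro 0 (by simp)⟩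

noncomputable def smulPair (π : O) (m : TMon n) (p : TateAlgebra n O π × TateAlgebra n O π) :
    TateAlgebra n O π × TateAlgebra n O π :=
  (monTA π m * p.1, monTA π m * p.2)

/-- `r` is the J-pair of `(p, q)` (with `p` carrying the larger signature part). -/
def IsJPair (π : O) (mo : MonomialOrder (Fin n))
    (p q r : TateAlgebra n O π × TateAlgebra n O π) : Prop :=
  ∃ m1 m2, IsLM π mo (p.2 : MvPowerSeries (Fin n) O) m1 ∧
    IsLM π mo (q.2 : MvPowerSeries (Fin n) O) m2 ∧
    (∃ s1 s2, IsLMopt π mo (p.1 : MvPowerSeries (Fin n) O) s1 ∧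
      IsLMopt π mo (q.1 : MvPowerSeries (Fin n) O) s2 ∧
      optLT mo (optMul (monDiv (monLcm m1 m2) m2) s2)
        (optMul (monDiv (monLcm m1 m2) m1) s1)) ∧
    r = smulPair π (monDiv (monLcm m1 m2) m1) p

section Residue

variable {k : Type*} [Field k]

/-- `P = ρ(f)`, the reduction mod `π` of `π^{-val f} f`. -/
def IsRho (π : O) (φ : O →+* k) (f : MvPowerSeries (Fin n) O)
    (P : MvPolynomial (Fin n) k) : Prop :=
  ∃ (N : ℕ) (g : MvPowerSeries (Fin n) O), f = (π ^ N) • g ∧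
    (∃ i, ¬ π ∣ MvPowerSeries.coeff i g) ∧
    ∀ i, MvPolynomial.coeff i P = φ (MvPowerSeries.coeff i g)

def rhoSet (π : O) (φ : O →+* k) (S : Set (TateAlgebra n O π)) :
    Set (MvPolynomial (Fin n) k) :=
  {P | ∃ f ∈ S, IsRho π φ (f : MvPowerSeries (Fin n) O) P}

/-- `Ī_N`: the image in `k[X]` of `π^{-N} (I ∩ π^N K{X}°)`. -/
def BarIdeal (π : O) (φ : O →+* k) (I : Ideal (TateAlgebra n O π)) (N : ℕ) :
    Set (MvPolynomial (Fin n) k) :=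
  {P | ∃ f ∈ I, ∃ g : MvPowerSeries (Fin n) O, (f : MvPowerSeries (Fin n) O) = (π ^ N) • g ∧
    ∀ i, MvPolynomial.coeff i P = φ (MvPowerSeries.coeff i g)}

/-- `d` is the leading exponent of the polynomial `P` for the monomial order `mo`. -/
def IsPolyLM (mo : MonomialOrder (Fin n)) (P : MvPolynomial (Fin n) k)
    (d : Fin n →₀ ℕ) : Prop :=
  MvPolynomial.coeff d P ≠ 0 ∧ ∀ e, MvPolynomial.coeff e P ≠ 0 → mo.toSyn e ≤ mo.toSyn d

/-- `G` is a Gröbner basis of the set (ideal) `J` of polynomials over the residue field. -/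
def IsPolyGB (mo : MonomialOrder (Fin n)) (G : Set (MvPolynomial (Fin n) k))
    (J : Set (MvPolynomial (Fin n) k)) : Prop :=
  G ⊆ J ∧ ∀ P ∈ J, P ≠ 0 → ∀ d, IsPolyLM mo P d →
    ∃ Q ∈ G, ∃ e, IsPolyLM mo Q e ∧ e ≤ d

end Residue

/-!
Since `π^{-val f} f` has a coefficient not divisible by `π`, the terms of `f` of valuation
`val f` are exactly the monomials of `ρ(f)`, and all other terms have larger valuation. The term
order compares valuations first, so `LM(f) = π^{val f} X^{LM(ρ(f))}`, and likewise for `g`; the claim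
is then arithmetic on exponents.
-/

theorem ValEq.unique {π : O} {f : MvPowerSeries (Fin n) O} {N N' : ℕ} (h : ValEq π f N)
    (h' : ValEq π f N') : N = N' := by
  by_contra hne
  rcases lt_or_gt_of_ne hne with hlt | hlt
  · exact h.2 fun j => (pow_dvd_pow π hlt).trans (h'.1 j)
  · exact h'.2 fun j => (pow_dvd_pow π hlt).trans (h.1 j)

theorem IsTerm.le_of_dvdAll {π : O} {f : MvPowerSeries (Fin n) O} {N : ℕ} {m : TMon n}
    (hm : IsTerm π f m) (hf : DvdAll π N f) : N ≤ m.1 := by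
  by_contra! hlt
  exact hm.2 ((pow_dvd_pow π hlt).trans (hf m.2))

theorem termLE_antisymm {mo : MonomialOrder (Fin n)} {a b : TMon n}
    (hab : termLE mo a b) (hba : termLE mo b a) : a = b := by
  rcases hab with rfl | hab
  · rfl
  rcases hba with rfl | hba
  · rfl
  rcases hab with hab | ⟨hab, hlt⟩ <;> rcases hba with hba | ⟨hba, hgt⟩
  · omega
  · omega
  · omega
  · exact absurd hlt hgt.not_gt

theorem IsLM.unique {π : O} {mo : MonomialOrder (Fin n)} {f : MvPowerSeries (Fin n) O}
    {m m' : TMon n} (h : IsLM π mo f m) (h' : IsLM π mo f m') : m = m' :=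
  termLE_antisymm (h'.2 m h.1) (h.2 m' h'.1)

section Domain

variable [IsDomain O] {π : O}

theorem isTerm_pow_smul_iff (hπ : π ≠ 0) (g : MvPowerSeries (Fin n) O) (N : ℕ)
    (j : Fin n →₀ ℕ) : IsTerm π (π ^ N • g) (N, j) ↔ ¬ π ∣ coeff j g := by
  simp only [IsTerm, map_smul, smul_eq_mul, dvd_mul_right, true_and, pow_succ,
    mul_dvd_mul_iff_left (pow_ne_zero N hπ)]

theorem valEq_pow_smul (hπ : π ≠ 0) {g : MvPowerSeries (Fin n) O} (N : ℕ)
    (hg : ∃ j, ¬ π ∣ coeff j g) : ValEq π (π ^ N • g) N := by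
  obtain ⟨j, hj⟩ := hg
  exact ⟨fun i => by simp [map_smul, smul_eq_mul],
    fun hdvd => ((isTerm_pow_smul_iff hπ g N j).2 hj).2 (hdvd j)⟩

variable {k : Type*} [Field k]

theorem isLM_pow_smul_of_isPolyLM (hπ : π ≠ 0) (mo : MonomialOrder (Fin n)) {φ : O →+* k}
    (hker : RingHom.ker φ = Ideal.span {π}) {g : MvPowerSeries (Fin n) O}
    {P : MvPolynomial (Fin n) k} (hP : ∀ j, P.coeff j = φ (coeff j g)) (N : ℕ)
    {d : Fin n →₀ ℕ} (hd : IsPolyLM mo P d) : IsLM π mo (π ^ N • g) (N, d) := by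
  have hcoeff_ne : ∀ j, P.coeff j ≠ 0 ↔ IsTerm π (π ^ N • g) (N, j) := fun j => by
    rw [isTerm_pow_smul_iff hπ, hP, Ne, ← RingHom.mem_ker, hker, Ideal.mem_span_singleton]
  refine ⟨(hcoeff_ne d).1 hd.1, fun ⟨a, j⟩ hterm => ?_⟩
  have hdvd : DvdAll π N (π ^ N • g) := fun i => by simp [map_smul, smul_eq_mul]
  rcases (hterm.le_of_dvdAll hdvd).lt_or_eq with hlt | rfl
  · exact Or.inr (Or.inl hlt)
  · rcases (hd.2 j ((hcoeff_ne j).2 hterm)).lt_or_eq with hlt | heq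
    · exact Or.inr (Or.inr ⟨rfl, hlt⟩)
    · exact Or.inl (by rw [mo.toSyn.injective heq])

theorem IsRho.isLM (hπ : π ≠ 0) (mo : MonomialOrder (Fin n)) {φ : O →+* k}
    (hker : RingHom.ker φ = Ideal.span {π}) {f : MvPowerSeries (Fin n) O} {N : ℕ}
    (hv : ValEq π f N) {P : MvPolynomial (Fin n) k} (hP : IsRho π φ f P) {d : Fin n →₀ ℕ}
    (hd : IsPolyLM mo P d) : IsLM π mo f (N, d) := by
  obtain ⟨N', g, rfl, hg, hcoeff⟩ := hP
  obtain rfl := (valEq_pow_smul hπ N' hg).unique hv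
  exact isLM_pow_smul_of_isPolyLM hπ mo hker hcoeff N' hd

end Domain

end TateStmt

open TateStmt MvPowerSeries

variable {n : ℕ} {O k : Type*} [CommRing O] [IsDomain O] [IsDiscreteValuationRing O] [Field k]

theorem statement_18_general (π : O) (hπ : Irreducible π) (mo : MonomialOrder (Fin n))
    (φ : O →+* k)
    (hker : RingHom.ker φ = Ideal.span {π})
    (f g : TateAlgebra n O π)
    (N M : ℕ) (hvf : ValEq π (f : MvPowerSeries (Fin n) O) N)
    (hvg : ValEq π (g : MvPowerSeries (Fin n) O) M) (hMN : M ≤ N)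
    (P Q : MvPolynomial (Fin n) k)
    (hP : IsRho π φ (f : MvPowerSeries (Fin n) O) P)
    (hQ : IsRho π φ (g : MvPowerSeries (Fin n) O) Q)
    (dP dQ : Fin n →₀ ℕ) (i : Fin n →₀ ℕ)
    (hdP : IsPolyLM mo P dP) (hdQ : IsPolyLM mo Q dQ) (hdiv : dP = i + dQ) :
    ∀ mg, IsLM π mo (g : MvPowerSeries (Fin n) O) mg →
      IsLM π mo (f : MvPowerSeries (Fin n) O) (monMul (N - M, i) mg) ∧
      monDvd mg (monMul (N - M, i) mg) := by
  intro mg hmg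
  obtain rfl : mg = (M, dQ) := hmg.unique (hQ.isLM hπ.ne_zero mo hker hvg hdQ)
  have hmul : monMul (N - M, i) (M, dQ) = (N, dP) := by
    simp only [monMul, Nat.sub_add_cancel hMN, hdiv]
  rw [hmul]
  exact ⟨hP.isLM hπ.ne_zero mo hker hvf hdP, hMN, hdiv ▸ le_add_self⟩

/-- let `f ∈ I` with `N = val f`, and `g` with `val g = M ≤ N` such that
`LM(ρ(g))` divides `LM(ρ(f))`, say `LM(ρ(f)) = X^i · LM(ρ(g))`. Then
`LM(f) = π^{N - val g} · X^i · LM(g)`; in particular `LM(g)` divides `LM(f)` in the monoid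
of Tate monomials. -/
theorem statement_18 (π : O) (hπ : Irreducible π) (mo : MonomialOrder (Fin n))
    (φ : O →+* k) (hsurj : Function.Surjective φ)
    (hker : RingHom.ker φ = Ideal.span {π})
    (I : Ideal (TateAlgebra n O π)) (f g : TateAlgebra n O π) (hfI : f ∈ I)
    (N M : ℕ) (hvf : ValEq π (f : MvPowerSeries (Fin n) O) N)
    (hvg : ValEq π (g : MvPowerSeries (Fin n) O) M) (hMN : M ≤ N)
    (P Q : MvPolynomial (Fin n) k)
    (hP : IsRho π φ (f : MvPowerSeries (Fin n) O) P)
    (hQ : IsRho π φ (g : MvPowerSeries (Fin n) O) Q)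
    (dP dQ : Fin n →₀ ℕ) (i : Fin n →₀ ℕ)
    (hdP : IsPolyLM mo P dP) (hdQ : IsPolyLM mo Q dQ) (hdiv : dP = i + dQ) :
    ∀ mg, IsLM π mo (g : MvPowerSeries (Fin n) O) mg →
      IsLM π mo (f : MvPowerSeries (Fin n) O) (monMul (N - M, i) mg) ∧
      monDvd mg (monMul (N - M, i) mg) :=
  statement_18_general π hπ mo φ hker f g N M hvf hvg hMN P Q hP hQ dP dQ i hdP hdQ hdiv
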